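/- If Z ∈ {0,1}^ℕ is 1-recurrent in every Π⁰₁ class P ⊆ {0,1}^ℕ with λ(P) > 0 (i.e., for every such P there is n ≥ 1 with T^n(Z) ∈ P), then Z is Martin-Löf random. -/

import Mathlib

open MeasureTheory

/-- `σ` is a prefix of the infinite binary sequence `Z`. -/
def IsPrefixOf (σ : List Bool) (Z : ℕ → Bool) : Prop :=
  ∀ i : ℕ, i < σ.length → σ.getD i false = Z i

/-- The open subset `⟦S⟧` of Cantor space generated by a set of finite binary strings. -/
def openCl (S : Set (List Bool)) : Set (ℕ → Bool) :=
  {Z | ∃ σ ∈ S, IsPrefixOf σ Z}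

/-- A set of finite binary strings is computably enumerable. -/
def CEStrings (S : Set (List Bool)) : Prop :=
  ∃ f : ℕ → Option (List Bool), Computable f ∧ S = {σ | ∃ n, f n = some σ}

/-- `P` is a Π⁰₁ class: the complement of the open set generated by a c.e. set of strings. -/
def Pi01Class (P : Set (ℕ → Bool)) : Prop :=
  ∃ S : Set (List Bool), CEStrings S ∧ P = (openCl S)ᶜ

/-- The shift operator `T` on Cantor space: `T Z n = Z (n+1)`. -/
def shift (Z : ℕ → Bool) : ℕ → Bool := fun n => Z (n + 1)

/-- `Z` is `k`-recurrent in `P`: for some `n ≥ 1`, `T^{n i} Z ∈ P` for all `1 ≤ i ≤ k`. -/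
def KRecurrentIn (k : ℕ) (P : Set (ℕ → Bool)) (Z : ℕ → Bool) : Prop :=
  ∃ n : ℕ, 1 ≤ n ∧ ∀ i : ℕ, 1 ≤ i → i ≤ k → shift^[n * i] Z ∈ P

/-- `Z` is multiply recurrent in `P`: `k`-recurrent in `P` for every `k ≥ 1`. -/
def MultiplyRecurrentIn (P : Set (ℕ → Bool)) (Z : ℕ → Bool) : Prop :=
  ∀ k : ℕ, 1 ≤ k → KRecurrentIn k P Z

/-- `μ` is the uniform (fair-coin) product measure on Cantor space:
each basic cylinder determined by a string `σ` has measure `2^{-|σ|}`. -/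
def IsUniformMeasure (μ : Measure (ℕ → Bool)) : Prop :=
  ∀ σ : List Bool, μ {Z | IsPrefixOf σ Z} = 2⁻¹ ^ σ.length

/-- A uniformly computably enumerable sequence of sets of strings. -/
def UniformlyCE (S : ℕ → Set (List Bool)) : Prop :=
  ∃ f : ℕ → ℕ → Option (List Bool), Computable₂ f ∧
    ∀ m, S m = {σ | ∃ n, f m n = some σ}

/-- A Martin-Löf test with respect to the measure `μ`. -/
def MLTest (μ : Measure (ℕ → Bool)) (S : ℕ → Set (List Bool)) : Prop :=
  UniformlyCE S ∧ ∀ m, μ (openCl (S m)) ≤ 2⁻¹ ^ m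

/-- `Z` is Martin-Löf random w.r.t. `μ`. -/
def MLRandom (μ : Measure (ℕ → Bool)) (Z : ℕ → Bool) : Prop :=
  ∀ S : ℕ → Set (List Bool), MLTest μ S → ∃ m, Z ∉ openCl (S m)

/-- A real is computable if some computable sequence of rationals approximates it
within `2^{-j}`. -/
def ComputableReal (x : ℝ) : Prop :=
  ∃ q : ℕ → ℚ, Computable q ∧ ∀ j : ℕ, |x - (q j : ℝ)| ≤ 2⁻¹ ^ j

/-- A Schnorr test w.r.t. `μ`: a Martin-Löf test whose levels have uniformly
computable measures. -/
def SchnorrTest (μ : Measure (ℕ → Bool)) (S : ℕ → Set (List Bool)) : Prop :=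
  UniformlyCE S ∧ (∀ m, μ (openCl (S m)) ≤ 2⁻¹ ^ m) ∧
    ∃ q : ℕ → ℕ → ℚ, Computable₂ q ∧
      ∀ m j : ℕ, |(μ (openCl (S m))).toReal - (q m j : ℝ)| ≤ 2⁻¹ ^ j

/-- `Z` is Schnorr random w.r.t. `μ`. -/
def SchnorrRandom (μ : Measure (ℕ → Bool)) (Z : ℕ → Bool) : Prop :=
  ∀ S : ℕ → Set (List Bool), SchnorrTest μ S → ∃ m, Z ∉ openCl (S m)

/-- `Z` is weakly (Kurtz) random w.r.t. `μ`: it belongs to no Π⁰₁ class of measure `0`. -/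
def KurtzRandom (μ : Measure (ℕ → Bool)) (Z : ℕ → Bool) : Prop :=
  ∀ P : Set (ℕ → Bool), Pi01Class P → μ P = 0 → Z ∉ P

/-!
Let `(U_m)` be a Martin-Löf test containing `Z`. Deleting the first `n` bits of the strings of
length `≥ n` in `U_{2n+2}` multiplies the measure by at most `2^n`, since a sequence in the
result lands in `U_{2n+2}` after prepending one of the `2^n` strings of length `n`. Hence the
union `D` of these open sets has measure at most `∑ 2^n 2^{-(2n+2)} = 1/2`, and its complement
is a Π⁰₁ class of positive measure, so `T^n Z ∉ ⟦D⟧` for some `n`. But a prefix of `Z` in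
`U_{2n+2}` has length at least `2n+2`, as its cylinder has measure at most `2^{-(2n+2)}`; with
its first `n` bits deleted it is a prefix of `T^n Z` lying in `D`.
-/

namespace CantorSpace

open Set

def cylinder (σ : List Bool) : Set (ℕ → Bool) := {Z | IsPrefixOf σ Z}

def cons (b : Bool) (Z : ℕ → Bool) : ℕ → Bool
  | 0 => b
  | i + 1 => Z i

def dropSet (n : ℕ) (R : Set (List Bool)) : Set (List Bool) :=
  {τ | ∃ σ ∈ R, n ≤ σ.length ∧ σ.drop n = τ}

@[simp]
theorem cons_zero (b : Bool) (Z : ℕ → Bool) : cons b Z 0 = b := rfl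

@[simp]
theorem shift_cons (b : Bool) (Z : ℕ → Bool) : shift (cons b Z) = Z := rfl

theorem shift_iterate_apply (n : ℕ) (Z : ℕ → Bool) (i : ℕ) : shift^[n] Z i = Z (n + i) := by
  induction n generalizing Z with
  | zero => simp
  | succ n ih => rw [Function.iterate_succ_apply, ih, shift, Nat.add_right_comm]

theorem isPrefixOf_nil (Z : ℕ → Bool) : IsPrefixOf [] Z := by
  simp [IsPrefixOf]

theorem isPrefixOf_cons {c : Bool} {τ : List Bool} {Z : ℕ → Bool} :
    IsPrefixOf (c :: τ) Z ↔ c = Z 0 ∧ IsPrefixOf τ (shift Z) := by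
  refine ⟨fun h => ⟨h 0 (by simp), fun i hi => h (i + 1) (by simpa using hi)⟩, ?_⟩
  rintro ⟨h0, h⟩ (_ | i) hi
  · exact h0
  · exact h i (by simpa using hi)

theorem cylinder_nil : cylinder [] = univ :=
  eq_univ_of_forall isPrefixOf_nil

theorem cons_preimage_cylinder_cons (b c : Bool) (τ : List Bool) :
    cons b ⁻¹' cylinder (c :: τ) = if c = b then cylinder τ else ∅ := by
  ext Z
  split_ifs with h <;> simp [cylinder, isPrefixOf_cons, h]

theorem cylinder_subset_cylinder {σ τ : List Bool} {Z : ℕ → Bool} (hσ : IsPrefixOf σ Z)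
    (hτ : IsPrefixOf τ Z) (h : σ.length ≤ τ.length) : cylinder τ ⊆ cylinder σ :=
  fun W hW i hi => by rw [hσ i hi, ← hτ i (by omega), hW i (by omega)]

theorem isPiSystem_range_cylinder : IsPiSystem (range cylinder) := by
  rintro _ ⟨σ, rfl⟩ _ ⟨τ, rfl⟩ ⟨Z, hσ, hτ⟩
  rcases le_total σ.length τ.length with h | h
  · exact ⟨τ, (inter_eq_self_of_subset_right (cylinder_subset_cylinder hσ hτ h)).symm⟩
  · exact ⟨σ, (inter_eq_self_of_subset_left (cylinder_subset_cylinder hτ hσ h)).symm⟩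

theorem openCl_eq_biUnion (S : Set (List Bool)) : openCl S = ⋃ σ ∈ S, cylinder σ := by
  ext Z
  simp [openCl, cylinder]

theorem openCl_iUnion (S : ℕ → Set (List Bool)) : openCl (⋃ n, S n) = ⋃ n, openCl (S n) := by
  simp only [openCl_eq_biUnion, biUnion_iUnion]

theorem mem_openCl_dropSet {R : Set (List Bool)} {σ : List Bool} (hσ : σ ∈ R) {n : ℕ}
    (hn : n ≤ σ.length) {Z : ℕ → Bool} (hZ : IsPrefixOf σ Z) :
    shift^[n] Z ∈ openCl (dropSet n R) := by
  refine ⟨σ.drop n, ⟨σ, hσ, hn, rfl⟩, fun i hi => ?_⟩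
  rw [List.length_drop] at hi
  rw [shift_iterate_apply, ← hZ (n + i) (by omega), List.getD_eq_getElem _ _ (by simp; omega),
    List.getD_eq_getElem _ _ (by omega), List.getElem_drop]

theorem dropSet_succ (n : ℕ) (R : Set (List Bool)) :
    dropSet (n + 1) R = dropSet 1 (dropSet n R) := by
  ext τ
  simp only [dropSet, Set.mem_ofPred_eq]
  constructor
  · rintro ⟨σ, hσ, hlen, rfl⟩
    exact ⟨σ.drop n, ⟨σ, hσ, by omega, rfl⟩, by simp; omega, by simp⟩
  · rintro ⟨_, ⟨σ, hσ, -, rfl⟩, hlen, rfl⟩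
    exact ⟨σ, hσ, by simp at hlen; omega, by simp⟩

theorem measurableSet_cylinder (σ : List Bool) : MeasurableSet (cylinder σ) := by
  have : cylinder σ = ⋂ i ∈ Finset.range σ.length, (fun Z => Z i) ⁻¹' {σ.getD i false} := by
    ext Z
    simp [cylinder, IsPrefixOf, eq_comm]
  rw [this]
  exact .biInter (Finset.countable_toSet _) fun i _ => measurable_pi_apply i (.singleton _)

theorem measurableSet_openCl (S : Set (List Bool)) : MeasurableSet (openCl S) := by
  rw [openCl_eq_biUnion]
  exact .biUnion S.to_countable fun σ _ => measurableSet_cylinder σ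

theorem measurable_cons (b : Bool) : Measurable (cons b) :=
  measurable_pi_lambda _ fun
    | 0 => measurable_const
    | i + 1 => measurable_pi_apply i

theorem eval_preimage_singleton_eq_biUnion (i : ℕ) (b : Bool) :
    (fun Z : ℕ → Bool => Z i) ⁻¹' {b} =
      ⋃ σ ∈ {σ : List Bool | σ.length = i + 1 ∧ σ.getD i false = b}, cylinder σ := by
  ext Z
  simp only [mem_preimage, mem_singleton_iff, mem_iUnion, exists_prop]
  constructor
  · rintro rfl
    refine ⟨(List.range (i + 1)).map Z, by simp, fun j hj => ?_⟩
    simp only [List.length_map, List.length_range] at hj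
    rw [List.getD_eq_getElem _ _ (by simpa using hj)]
    simp
  · rintro ⟨σ, ⟨hlen, rfl⟩, hZ⟩
    exact (hZ i (by omega)).symm

theorem measurableSpace_eq_generateFrom_cylinder :
    (inferInstance : MeasurableSpace (ℕ → Bool)) = .generateFrom (range cylinder) := by
  refine le_antisymm ?_ (MeasurableSpace.generateFrom_le (forall_mem_range.2 measurableSet_cylinder))
  refine iSup_le fun i => Measurable.comap_le
    (@measurable_to_countable' _ _ _ _ (.generateFrom (range cylinder)) _ fun b => ?_)
  rw [eval_preimage_singleton_eq_biUnion i b]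
  exact .biUnion (to_countable _) fun σ _ => .basic _ (mem_range_self σ)

theorem uniformlyCE_dropSet {S : ℕ → Set (List Bool)} (hS : UniformlyCE S) {g : ℕ → ℕ}
    (hg : Computable g) : UniformlyCE fun n => dropSet n (S (g n)) := by
  obtain ⟨f, hf, hfS⟩ := hS
  refine ⟨fun n k => (f (g n) k).bind fun σ => if n ≤ σ.length then some (σ.drop n) else none,
    ?_, fun n => ?_⟩
  · refine Computable.option_bind (hf.comp (hg.comp .fst) .snd) (Primrec.to_comp ?_)
    exact Primrec.ite (Primrec.nat_le.comp (Primrec.fst.comp .fst) (Primrec.list_length.comp .snd))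
      (Primrec.option_some.comp (Primrec.list_drop.comp (Primrec.fst.comp .fst) .snd))
      (Primrec.const none)
  · ext τ
    simp only [dropSet, hfS, Set.mem_ofPred_eq, Option.bind_eq_some_iff,
      Option.ite_none_right_eq_some, Option.some.injEq]
    grind

theorem ceStrings_iUnion {S : ℕ → Set (List Bool)} (hS : UniformlyCE S) :
    CEStrings (⋃ n, S n) := by
  obtain ⟨f, hf, hfS⟩ := hS
  refine ⟨fun k => f k.unpair.1 k.unpair.2, hf.comp (Computable.fst.comp .unpair)
    (Computable.snd.comp .unpair), ?_⟩
  ext σ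
  simp only [Set.mem_iUnion, hfS, Set.mem_ofPred_eq]
  exact ⟨fun ⟨n, k, h⟩ => ⟨Nat.pair n k, by simpa using h⟩, fun ⟨k, h⟩ => ⟨_, _, h⟩⟩

end CantorSpace

namespace IsUniformMeasure

open Set CantorSpace

variable {μ : Measure (ℕ → Bool)}

theorem measure_cylinder (hμ : IsUniformMeasure μ) (σ : List Bool) :
    μ (cylinder σ) = 2⁻¹ ^ σ.length :=
  hμ σ

theorem isProbabilityMeasure (hμ : IsUniformMeasure μ) : IsProbabilityMeasure μ :=
  ⟨by rw [← cylinder_nil]; exact (hμ []).trans (pow_zero _)⟩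

theorem map_cons_false_add_map_cons_true (hμ : IsUniformMeasure μ) :
    μ.map (cons false) + μ.map (cons true) = (2 : ENNReal) • μ := by
  have := hμ.isProbabilityMeasure
  refine ext_of_generate_finite _ measurableSpace_eq_generateFrom_cylinder
    isPiSystem_range_cylinder ?_ ?_
  · rintro _ ⟨σ, rfl⟩
    rw [Measure.add_apply, Measure.map_apply (measurable_cons _) (measurableSet_cylinder σ),
      Measure.map_apply (measurable_cons _) (measurableSet_cylinder σ), Measure.smul_apply,
      smul_eq_mul]
    cases σ with
    | nil => simp [cylinder_nil, one_add_one_eq_two]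
    | cons c τ =>
      rw [hμ.measure_cylinder, List.length_cons, pow_succ', ← mul_assoc,
        ENNReal.mul_inv_cancel two_ne_zero ENNReal.ofNat_ne_top, one_mul]
      cases c <;> simp [cons_preimage_cylinder_cons, hμ.measure_cylinder]
  · rw [Measure.add_apply, Measure.map_apply (measurable_cons _) .univ,
      Measure.map_apply (measurable_cons _) .univ, preimage_univ, preimage_univ, measure_univ,
      Measure.smul_apply, measure_univ, one_add_one_eq_two, smul_eq_mul, mul_one]

theorem measure_openCl_dropSet_one_le (hμ : IsUniformMeasure μ) (R : Set (List Bool)) :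
    μ (openCl (dropSet 1 R)) ≤ 2 * μ (openCl R) := by
  have hsub : openCl (dropSet 1 R) ⊆ cons false ⁻¹' openCl R ∪ cons true ⁻¹' openCl R := by
    rintro Z ⟨_, ⟨σ, hσ, hlen, rfl⟩, hZ⟩
    obtain ⟨b, τ, rfl⟩ := List.exists_cons_of_length_pos hlen
    have : cons b Z ∈ openCl R := ⟨b :: τ, hσ, isPrefixOf_cons.2 ⟨rfl, by simpa using hZ⟩⟩
    cases b
    exacts [Or.inl this, Or.inr this]
  have hR := measurableSet_openCl R
  calc μ (openCl (dropSet 1 R))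
      ≤ μ (cons false ⁻¹' openCl R) + μ (cons true ⁻¹' openCl R) :=
        (measure_mono hsub).trans (measure_union_le _ _)
    _ = 2 * μ (openCl R) := by
        rw [← Measure.map_apply (measurable_cons _) hR, ← Measure.map_apply (measurable_cons _) hR,
          ← Measure.add_apply, hμ.map_cons_false_add_map_cons_true, Measure.smul_apply,
          smul_eq_mul]

theorem measure_openCl_dropSet_le (hμ : IsUniformMeasure μ) (n : ℕ) (R : Set (List Bool)) :
    μ (openCl (dropSet n R)) ≤ 2 ^ n * μ (openCl R) := by
  induction n with
  | zero => simp [dropSet]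
  | succ n ih =>
    calc μ (openCl (dropSet (n + 1) R)) ≤ 2 * μ (openCl (dropSet n R)) := by
          rw [dropSet_succ]
          exact hμ.measure_openCl_dropSet_one_le _
      _ ≤ 2 * (2 ^ n * μ (openCl R)) := by gcongr
      _ = 2 ^ (n + 1) * μ (openCl R) := by ring

theorem le_length_of_mem (hμ : IsUniformMeasure μ) {R : Set (List Bool)} {σ : List Bool}
    (hσ : σ ∈ R) {m : ℕ} (hR : μ (openCl R) ≤ 2⁻¹ ^ m) : m ≤ σ.length := by
  have hσR : μ (cylinder σ) ≤ μ (openCl R) := measure_mono fun Z hZ => ⟨σ, hσ, hZ⟩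
  have h := hμ.measure_cylinder σ ▸ hσR.trans hR
  rw [← ENNReal.inv_pow, ← ENNReal.inv_pow, ENNReal.inv_le_inv] at h
  exact (Nat.pow_le_pow_iff_right one_lt_two).1 (by exact_mod_cast h)

theorem measure_openCl_iUnion_dropSet_le (hμ : IsUniformMeasure μ) {S : ℕ → Set (List Bool)}
    (hS : ∀ m, μ (openCl (S m)) ≤ 2⁻¹ ^ m) :
    μ (openCl (⋃ n, dropSet n (S (2 * n + 2)))) ≤ 2⁻¹ := by
  have hterm (n : ℕ) : μ (openCl (dropSet n (S (2 * n + 2)))) ≤ 2⁻¹ ^ 2 * 2⁻¹ ^ n :=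
    calc μ (openCl (dropSet n (S (2 * n + 2)))) ≤ 2 ^ n * 2⁻¹ ^ (2 * n + 2) :=
          (hμ.measure_openCl_dropSet_le n _).trans (by gcongr; exact hS _)
      _ = 2⁻¹ ^ 2 * 2⁻¹ ^ n := by
          rw [show 2 * n + 2 = n + (2 + n) by ring, pow_add, ← mul_assoc, ← mul_pow,
            ENNReal.mul_inv_cancel two_ne_zero ENNReal.ofNat_ne_top, one_pow, one_mul, pow_add]
  calc μ (openCl (⋃ n, dropSet n (S (2 * n + 2))))
      ≤ ∑' n, 2⁻¹ ^ 2 * 2⁻¹ ^ n := by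
        rw [openCl_iUnion]
        exact (measure_iUnion_le _).trans (ENNReal.tsum_le_tsum hterm)
    _ = 2⁻¹ := by
        rw [ENNReal.tsum_mul_left, ENNReal.tsum_geometric, ENNReal.one_sub_inv_two, inv_inv, sq,
          mul_assoc, ENNReal.inv_mul_cancel two_ne_zero ENNReal.ofNat_ne_top, mul_one]

end IsUniformMeasure

open CantorSpace in
/-- Kučera's theorem, converse direction: if `Z` is `1`-recurrent in every Π⁰₁ class of
positive measure, then `Z` is Martin-Löf random. -/
theorem mlRandom_of_oneRecurrent (μ : Measure (ℕ → Bool)) (hμ : IsUniformMeasure μ)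
    (Z : ℕ → Bool)
    (hrec : ∀ P : Set (ℕ → Bool), Pi01Class P → 0 < μ P →
      ∃ n : ℕ, 1 ≤ n ∧ shift^[n] Z ∈ P) :
    MLRandom μ Z := by
  rintro S ⟨hS, hSμ⟩
  by_contra! hZ
  set D := ⋃ n, dropSet n (S (2 * n + 2))
  have hD : CEStrings D := ceStrings_iUnion (uniformlyCE_dropSet hS
    (Primrec.nat_add.comp (Primrec.nat_mul.comp (.const 2) .id) (.const 2)).to_comp)
  have hP : 0 < μ (openCl D)ᶜ := by
    have := hμ.isProbabilityMeasure
    rw [prob_compl_eq_one_sub (measurableSet_openCl D), tsub_pos_iff_lt]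
    exact (hμ.measure_openCl_iUnion_dropSet_le hSμ).trans_lt ENNReal.one_half_lt_one
  obtain ⟨n, -, hn⟩ := hrec _ ⟨D, hD, rfl⟩ hP
  obtain ⟨σ, hσ, hσZ⟩ := hZ (2 * n + 2)
  have hlen := hμ.le_length_of_mem hσ (hSμ _)
  exact hn (openCl_iUnion _ ▸ Set.mem_iUnion.2 ⟨n, mem_openCl_dropSet hσ (by omega) hσZ⟩)
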